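/- Let 1 < p < q < 2 and set α = p/(p-1). There exist constants d, D > 0 such that ‖f‖_{Exp L^α} ≤ d · ‖f‖_{X_p} for every f ∈ X_p, and ‖f‖_{X_q} ≤ D · ‖f‖_{Exp L^α} for every f ∈ Exp L^α. (That is, X_p ⊂ Exp L^{p/(p-1)} ⊂ X_q as continuous inclusions.) -/

import Mathlib

open MeasureTheory
open scoped ENNReal

/-- Lebesgue measure restricted to `[0,1]`. -/
noncomputable def mu01 : Measure ℝ := volume.restrict (Set.Icc 0 1)

/-- The weight `W_p(t) = (log(e/t))^{1-p}` for `t ∈ (0,1]`, `W_p(0)=0`. -/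
noncomputable def Wp (p t : ℝ) : ℝ :=
  if t = 0 then 0 else Real.log (Real.exp 1 / t) ^ (1 - p)

/-- The norm of the Lorentz space `X_p` on `[0,1]`:
`‖f‖_{X_p} = (∫_0^∞ W_p(μ{s ∈ [0,1] : |f s|^p > λ}) dλ)^{1/p}`. -/
noncomputable def XpNorm (p : ℝ) (f : ℝ → ℝ) : ℝ≥0∞ :=
  (∫⁻ lam in Set.Ioi (0 : ℝ),
      ENNReal.ofReal
        (Wp p (volume {s : ℝ | s ∈ Set.Icc (0 : ℝ) 1 ∧ lam < |f s| ^ p}).toReal)) ^ (1 / p)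

/-- Luxemburg norm of the exponential Orlicz space `Exp L^α` on `[0,1]`. -/
noncomputable def expLNorm (α : ℝ) (f : ℝ → ℝ) : ℝ≥0∞ :=
  ⨅ (lam : ℝ) (_ : 0 < lam ∧
      ∫⁻ t, ENNReal.ofReal (Real.exp ((|f t| / lam) ^ α) - 1) ∂mu01 ≤ 1),
    ENNReal.ofReal lam

/-- Weak `ℓ^q` quasinorm of a finite family of reals. -/
noncomputable def weakLq (q : ℝ) {n : ℕ} (a : Fin n → ℝ) : ℝ :=
  ⨆ t : Set.Ioi (0 : ℝ), t.1 * (Nat.card {k : Fin n // t.1 < |a k|} : ℝ) ^ (1 / q)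

/-- Weak `ℓ^q` quasinorm of a sequence with values in `[0,∞]`, cardinalities
taken via the counting measure on `ℕ`. -/
noncomputable def weakLqSeq (q : ℝ) (a : ℕ → ℝ≥0∞) : ℝ≥0∞ :=
  ⨆ t : Set.Ioi (0 : ℝ),
    ENNReal.ofReal t.1 * Measure.count {k : ℕ | ENNReal.ofReal t.1 < a k} ^ (1 / q)

/-- Peetre `K`-functional for the couple `(L^1[0,1], L^∞[0,1])`. -/
noncomputable def Kfun (τ : ℝ) (f : ℝ → ℝ) : ℝ≥0∞ :=
  ⨅ (g : ℝ → ℝ) (h : ℝ → ℝ) (_ : f = g + h),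
    eLpNorm g 1 mu01 + ENNReal.ofReal τ * eLpNorm h ⊤ mu01

/-- The Rademacher functions `r_k(t) = sgn(sin(2^k π t))`. -/
noncomputable def rademacher (k : ℕ) (t : ℝ) : ℝ :=
  Real.sign (Real.sin (2 ^ k * Real.pi * t))

/-- Marcinkiewicz space norm `‖f‖_{M_φ} = sup_{0<t≤1} (φ(t)/t) K(t,f;L^1,L^∞)`. -/
noncomputable def MNorm (φ : ℝ → ℝ) (f : ℝ → ℝ) : ℝ≥0∞ :=
  ⨆ t : {t : ℝ // 0 < t ∧ t ≤ 1}, ENNReal.ofReal (φ t.1 / t.1) * Kfun t.1 f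

/-!
Both inclusions go through distribution functions. Chebyshev's inequality for the Lorentz
integral gives `W_p(μ{|f| > t}) t^p ≤ ‖f‖_{X_p}^p`, i.e. `μ{|f| > t} ≤ e exp(-(t/‖f‖_{X_p})^α)`
with `α = p/(p-1)`; integrating this tail by the layer-cake formula bounds the Orlicz modular at
`λ = (e+1)^{1/α} ‖f‖_{X_p}`. Conversely, Chebyshev's inequality for the Orlicz modular at an
admissible `λ` gives `μ{|f| > t} ≤ e exp(-(t/λ)^α)` for `t ≥ λ`, hence
`W_q(μ{|f|^q > x}) ≤ (x/λ^q)^(-α(q-1)/q)` for `x > λ^q`, and this is integrable at infinity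
exactly when `p < q`.
-/

open Real Set

lemma one_le_log_exp_one_div {t : ℝ} (h0 : 0 < t) (h1 : t ≤ 1) : 1 ≤ log (exp 1 / t) := by
  rw [log_div (exp_ne_zero 1) h0.ne', log_exp]
  linarith [log_nonpos h0.le h1]

lemma Wp_nonneg (p : ℝ) {t : ℝ} (ht : t ∈ Icc (0 : ℝ) 1) : 0 ≤ Wp p t := by
  rcases ht.1.eq_or_lt with rfl | ht0
  · simp [Wp]
  · rw [Wp, if_neg ht0.ne']
    exact rpow_nonneg (by linarith [one_le_log_exp_one_div ht0 ht.2]) _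

lemma Wp_monotoneOn {p : ℝ} (hp : 1 ≤ p) : MonotoneOn (Wp p) (Icc 0 1) := by
  rintro a ⟨ha0, -⟩ b hb hab
  rcases ha0.eq_or_lt with rfl | ha
  · rw [Wp, if_pos rfl]
    exact Wp_nonneg p hb
  · have hb0 := ha.trans_le hab
    rw [Wp, Wp, if_neg ha.ne', if_neg hb0.ne']
    refine rpow_le_rpow_of_nonpos (by linarith [one_le_log_exp_one_div hb0 hb.2]) ?_ (by linarith)
    exact log_le_log (by positivity) (div_le_div_of_nonneg_left (exp_pos 1).le ha hab)

lemma Wp_exp_one_sub (p u : ℝ) : Wp p (exp (1 - u)) = u ^ (1 - p) := by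
  rw [Wp, if_neg (exp_ne_zero _), ← exp_sub, sub_sub_cancel, log_exp]

lemma Wp_le_one {p t : ℝ} (hp : 1 ≤ p) (ht : t ∈ Icc (0 : ℝ) 1) : Wp p t ≤ 1 := by
  simpa [Wp] using Wp_monotoneOn hp ht (by simp : (1 : ℝ) ∈ Icc 0 1) ht.2

lemma le_exp_one_sub_of_Wp_le {p m u : ℝ} (hp : 1 < p) (hm : m ∈ Icc (0 : ℝ) 1) (hu : 0 < u)
    (h : Wp p m ≤ u ^ (1 - p)) : m ≤ exp (1 - u) := by
  rcases hm.1.eq_or_lt with rfl | hm0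
  · exact (exp_pos _).le
  set L := log (exp 1 / m)
  have hL : 1 ≤ L := one_le_log_exp_one_div hm0 hm.2
  have hmL : m = exp (1 - L) := by
    rw [exp_sub, exp_log (by positivity), div_div_cancel₀ (exp_ne_zero 1)]
  rw [hmL, Wp_exp_one_sub, rpow_le_rpow_iff_of_neg (by linarith) hu (by linarith)] at h
  rw [hmL]
  exact exp_le_exp.2 (by linarith)

lemma Wp_le_of_le_exp_one_sub {p m u : ℝ} (hp : 1 ≤ p) (hm : 0 ≤ m) (hu : 1 ≤ u)
    (h : m ≤ exp (1 - u)) : Wp p m ≤ u ^ (1 - p) := by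
  have hexp : exp (1 - u) ∈ Icc (0 : ℝ) 1 := ⟨(exp_pos _).le, exp_le_one_iff.2 (by linarith)⟩
  rw [← Wp_exp_one_sub]
  exact Wp_monotoneOn hp ⟨hm, h.trans hexp.2⟩ hexp h

lemma inv_exp_sub_one_le_exp_one_sub {u : ℝ} (hu : 1 ≤ u) : (exp u - 1)⁻¹ ≤ exp (1 - u) := by
  have hprod : exp (1 - u) * exp u = exp 1 := by rw [← exp_add, sub_add_cancel]
  have hle : exp (1 - u) ≤ 1 := exp_le_one_iff.2 (by linarith)
  rw [inv_le_iff_one_le_mul₀ (by linarith [add_one_le_exp u]), mul_sub, hprod, mul_one]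
  linarith [add_one_le_exp 1]

lemma le_ofReal_mul_of_forall_le_ofReal {a b : ℝ≥0∞} {c : ℝ} (hc : 0 < c)
    (h : ∀ N : ℝ, 0 < N → b ≤ ENNReal.ofReal N → a ≤ ENNReal.ofReal (c * N)) :
    a ≤ ENNReal.ofReal c * b := by
  have hc' : ENNReal.ofReal c ≠ 0 := (ENNReal.ofReal_pos.2 hc).ne'
  rw [mul_comm, ← ENNReal.div_le_iff hc' ENNReal.ofReal_ne_top]
  refine le_of_forall_gt_imp_ge_of_dense fun x hbx => ?_
  rcases eq_or_ne x ⊤ with rfl | hx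
  · exact le_top
  have hx0 : 0 < x.toReal := ENNReal.toReal_pos (pos_of_gt hbx).ne' hx
  rw [ENNReal.div_le_iff hc' ENNReal.ofReal_ne_top, ← ENNReal.ofReal_toReal hx,
    ← ENNReal.ofReal_mul hx0.le, mul_comm]
  exact h _ hx0 (by rw [ENNReal.ofReal_toReal hx]; exact hbx.le)

lemma lintegral_Ioi_rpow_neg {c γ : ℝ} (hc : 0 < c) (hγ : 1 < γ) :
    ∫⁻ x in Ioi c, ENNReal.ofReal (x ^ (-γ)) = ENNReal.ofReal (c ^ (1 - γ) / (γ - 1)) := by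
  rw [← ofReal_integral_eq_lintegral_ofReal (integrableOn_Ioi_rpow_of_lt (by linarith) hc)
      (ae_restrict_of_forall_mem measurableSet_Ioi fun x hx =>
        rpow_nonneg (hc.trans hx).le _),
    integral_Ioi_rpow_of_lt (by linarith) hc, neg_div, ← div_neg]
  ring_nf

lemma lintegral_Ioi_one_add_rpow_neg {γ : ℝ} (hγ : 1 < γ) :
    ∫⁻ s in Ioi 0, ENNReal.ofReal ((1 + s) ^ (-γ)) = ENNReal.ofReal (1 / (γ - 1)) := by
  have hshift : ∫⁻ s in Ioi 0, ENNReal.ofReal ((1 + s) ^ (-γ))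
      = ∫⁻ s, (Ioi 1).indicator (fun x => ENNReal.ofReal (x ^ (-γ))) (s + 1) := by
    rw [← lintegral_indicator measurableSet_Ioi]
    congr 1 with s
    by_cases hs : s ∈ Ioi 0
    · rw [indicator_of_mem hs, indicator_of_mem (show s + 1 ∈ Ioi 1 by simpa using hs), add_comm]
    · rw [indicator_of_notMem hs, indicator_of_notMem (show s + 1 ∉ Ioi 1 by simpa using hs)]
  rw [hshift, lintegral_add_right_eq_self, lintegral_indicator measurableSet_Ioi,
    lintegral_Ioi_rpow_neg one_pos hγ, one_rpow]

lemma lintegral_Ioi_div_rpow_neg {a γ : ℝ} (ha : 0 < a) (hγ : 1 < γ) :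
    ∫⁻ x in Ioi a, ENNReal.ofReal ((x / a) ^ (-γ)) = ENNReal.ofReal (a / (γ - 1)) := by
  have hfun : EqOn (fun x => ENNReal.ofReal ((x / a) ^ (-γ)))
      (fun x => ENNReal.ofReal (a ^ γ) * ENNReal.ofReal (x ^ (-γ))) (Ioi a) := fun x hx => by
    dsimp only
    rw [← ENNReal.ofReal_mul (by positivity), div_rpow (ha.trans hx).le ha.le, rpow_neg ha.le,
      div_inv_eq_mul, mul_comm]
  rw [setLIntegral_congr_fun measurableSet_Ioi hfun, lintegral_const_mul' _ _ ENNReal.ofReal_ne_top,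
    lintegral_Ioi_rpow_neg ha hγ, ← ENNReal.ofReal_mul (by positivity), ← mul_div_assoc,
    ← rpow_add ha, add_sub_cancel, rpow_one]

lemma lintegral_Ioi_le_of_le_one_of_le_div_rpow_neg {g : ℝ → ℝ≥0∞} {a γ : ℝ} (ha : 0 < a)
    (hγ : 1 < γ) (hle_one : ∀ x, g x ≤ 1)
    (htail : ∀ x, a < x → g x ≤ ENNReal.ofReal ((x / a) ^ (-γ))) :
    ∫⁻ x in Ioi 0, g x ≤ ENNReal.ofReal (γ / (γ - 1) * a) := by
  have hsplit : γ / (γ - 1) * a = a + a / (γ - 1) := by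
    field_simp [(by linarith : γ - 1 ≠ 0)]
    ring
  rw [← Ioc_union_Ioi_eq_Ioi ha.le, lintegral_union measurableSet_Ioi (Ioc_disjoint_Ioi le_rfl),
    hsplit, ENNReal.ofReal_add ha.le (div_pos ha (by linarith)).le]
  gcongr ?_ + ?_
  · calc ∫⁻ x in Ioc 0 a, g x ≤ ∫⁻ _ in Ioc 0 a, 1 :=
          setLIntegral_mono' measurableSet_Ioc fun x _ => hle_one x
      _ = ENNReal.ofReal a := by simp [Real.volume_Ioc]
  · exact (setLIntegral_mono' measurableSet_Ioi htail).trans_eq (lintegral_Ioi_div_rpow_neg ha hγ)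

section

variable {X : Type*} [MeasurableSpace X] {μ : Measure X} {f : X → ℝ}

lemma lintegral_exp_rpow_sub_one_le_one (hf : AEMeasurable f μ) {α N : ℝ} (hα : 0 < α)
    (hN : 0 < N) (h : ∀ t, 0 < t → μ {x | t < |f x|} ≤ ENNReal.ofReal (exp (1 - (t / N) ^ α))) :
    ∫⁻ x, ENNReal.ofReal (exp ((|f x| / ((exp 1 + 1) ^ α⁻¹ * N)) ^ α) - 1) ∂μ ≤ 1 := by
  set c := (exp 1 + 1) ^ α⁻¹
  have hc : 0 < c := by positivity
  have hlevel : ∀ s, 0 < s → μ {x | s < exp ((|f x| / (c * N)) ^ α) - 1}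
      ≤ ENNReal.ofReal (exp 1 * (1 + s) ^ (-(exp 1 + 1))) := by
    intro s hs
    have hL : 0 < log (1 + s) := log_pos (by linarith)
    have hset : {x | s < exp ((|f x| / (c * N)) ^ α) - 1}
        = {x | c * N * log (1 + s) ^ α⁻¹ < |f x|} := by
      ext x
      simp only [mem_ofPred_eq]
      rw [lt_sub_iff_add_lt', ← log_lt_iff_lt_exp (by linarith), ← lt_div_iff₀' (by positivity),
        rpow_inv_lt_iff_of_pos hL.le (by positivity) hα]
    rw [hset]
    refine (h _ (by positivity)).trans_eq (congrArg ENNReal.ofReal ?_)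
    rw [mul_right_comm, mul_div_cancel_right₀ _ hN.ne', mul_rpow hc.le (by positivity),
      rpow_inv_rpow hL.le hα.ne', rpow_inv_rpow (by positivity) hα.ne',
      rpow_def_of_pos (by linarith), ← exp_add]
    ring_nf
  rw [lintegral_eq_lintegral_meas_lt μ
    (ae_of_all _ fun x => sub_nonneg.2 (one_le_exp (by positivity))) (by fun_prop)]
  calc ∫⁻ s in Ioi 0, μ {x | s < exp ((|f x| / (c * N)) ^ α) - 1}
      ≤ ∫⁻ s in Ioi 0, ENNReal.ofReal (exp 1) * ENNReal.ofReal ((1 + s) ^ (-(exp 1 + 1))) :=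
        setLIntegral_mono' measurableSet_Ioi fun s hs =>
          (hlevel s hs).trans_eq (ENNReal.ofReal_mul (exp_pos 1).le)
    _ = 1 := by
        rw [lintegral_const_mul' _ _ ENNReal.ofReal_ne_top,
          lintegral_Ioi_one_add_rpow_neg (by linarith [exp_pos 1]), ← ENNReal.ofReal_mul
          (exp_pos 1).le, add_sub_cancel_right, mul_one_div_cancel (exp_pos 1).ne',
          ENNReal.ofReal_one]

lemma meas_lt_abs_le_of_lintegral_exp_le_one (hf : AEMeasurable f μ) {α lam t : ℝ} (hα : 0 ≤ α)
    (hlam : 0 < lam) (hlt : lam ≤ t)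
    (h : ∫⁻ x, ENNReal.ofReal (exp ((|f x| / lam) ^ α) - 1) ∂μ ≤ 1) :
    μ {x | t < |f x|} ≤ ENNReal.ofReal (exp (1 - (t / lam) ^ α)) := by
  set u := (t / lam) ^ α
  have hu : 1 ≤ u := one_le_rpow ((one_le_div hlam).2 hlt) hα
  have hpos : 0 < exp u - 1 := by linarith [add_one_le_exp u]
  have hsub : {x | t < |f x|} ⊆
      {x | ENNReal.ofReal (exp u - 1) ≤ ENNReal.ofReal (exp ((|f x| / lam) ^ α) - 1)} := by
    intro x hx
    refine ENNReal.ofReal_le_ofReal (sub_le_sub_right (exp_le_exp.2 ?_) 1)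
    exact rpow_le_rpow (div_pos (hlam.trans_le hlt) hlam).le
      (div_le_div_of_nonneg_right hx.le hlam.le) hα
  calc μ {x | t < |f x|} ≤ (ENNReal.ofReal (exp u - 1))⁻¹ := by
        rw [ENNReal.le_inv_iff_mul_le, mul_comm]
        exact (mul_le_mul' le_rfl (measure_mono hsub)).trans
          ((mul_meas_ge_le_lintegral₀ (by fun_prop) _).trans h)
    _ = ENNReal.ofReal (exp u - 1)⁻¹ := (ENNReal.ofReal_inv_of_pos hpos).symm
    _ ≤ _ := ENNReal.ofReal_le_ofReal (inv_exp_sub_one_le_exp_one_sub hu)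

end

instance : IsProbabilityMeasure mu01 := ⟨by simp [mu01, Real.volume_Icc]⟩

lemma volume_Icc_inter_eq_mu01 (P : ℝ → Prop) :
    volume {s : ℝ | s ∈ Icc (0 : ℝ) 1 ∧ P s} = mu01 {s | P s} := by
  rw [mu01, Measure.restrict_apply' measurableSet_Icc]
  exact congrArg volume (Set.ext fun s => and_comm)

lemma XpNorm_rpow {p : ℝ} (hp : p ≠ 0) (f : ℝ → ℝ) :
    XpNorm p f ^ p = ∫⁻ lam in Ioi 0, ENNReal.ofReal (Wp p (mu01.real {s | lam < |f s| ^ p})) := by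
  simp_rw [XpNorm, volume_Icc_inter_eq_mu01, ← ENNReal.rpow_mul, one_div_mul_cancel hp,
    ENNReal.rpow_one, measureReal_def]

lemma ofReal_Wp_mul_le_XpNorm_rpow {p lam : ℝ} (hp : 1 ≤ p) (f : ℝ → ℝ) :
    ENNReal.ofReal (Wp p (mu01.real {s | lam < |f s| ^ p})) * ENNReal.ofReal lam
      ≤ XpNorm p f ^ p := by
  rw [XpNorm_rpow (by positivity) f]
  calc ENNReal.ofReal (Wp p (mu01.real {s | lam < |f s| ^ p})) * ENNReal.ofReal lam
      = ∫⁻ _ in Ioc 0 lam, ENNReal.ofReal (Wp p (mu01.real {s | lam < |f s| ^ p})) := by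
        rw [setLIntegral_const, Real.volume_Ioc, sub_zero]
    _ ≤ ∫⁻ t in Ioc 0 lam, ENNReal.ofReal (Wp p (mu01.real {s | t < |f s| ^ p})) := by
        refine setLIntegral_mono' measurableSet_Ioc fun t ht => ENNReal.ofReal_le_ofReal ?_
        refine Wp_monotoneOn hp ⟨measureReal_nonneg, measureReal_le_one⟩
          ⟨measureReal_nonneg, measureReal_le_one⟩ (measureReal_mono fun s hs => ?_)
        exact ht.2.trans_lt hs
    _ ≤ _ := lintegral_mono_set Ioc_subset_Ioi_self

lemma mu01_lt_abs_le_of_XpNorm_le {p N t : ℝ} {f : ℝ → ℝ} (hp : 1 < p) (hN : 0 < N)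
    (hf : XpNorm p f ≤ ENNReal.ofReal N) (ht : 0 < t) :
    mu01 {s | t < |f s|} ≤ ENNReal.ofReal (exp (1 - (t / N) ^ (p / (p - 1)))) := by
  have hp0 : 0 < p := by linarith
  have hlevel : {s | t < |f s|} = {s | t ^ p < |f s| ^ p} := by
    ext s
    exact (rpow_lt_rpow_iff ht.le (abs_nonneg _) hp0).symm
  have hcheb : Wp p (mu01.real {s | t ^ p < |f s| ^ p}) * t ^ p ≤ N ^ p := by
    have := (ofReal_Wp_mul_le_XpNorm_rpow (lam := t ^ p) hp.le f).trans
      (ENNReal.rpow_le_rpow hf hp0.le)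
    rwa [ENNReal.ofReal_rpow_of_nonneg hN.le hp0.le, ← ENNReal.ofReal_mul
      (Wp_nonneg p ⟨measureReal_nonneg, measureReal_le_one⟩),
      ENNReal.ofReal_le_ofReal_iff (by positivity)] at this
  have hW : Wp p (mu01.real {s | t ^ p < |f s| ^ p}) ≤ ((t / N) ^ (p / (p - 1))) ^ (1 - p) := by
    have hexp : p / (p - 1) * (1 - p) = -p := by
      field_simp [(by linarith : p - 1 ≠ 0)]
      ring
    rw [← rpow_mul (by positivity), hexp, rpow_neg (by positivity), div_rpow ht.le hN.le, inv_div, le_div_iff₀ (by positivity)]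
    exact hcheb
  rw [hlevel, ← ENNReal.ofReal_toReal (measure_ne_top _ _)]
  exact ENNReal.ofReal_le_ofReal (le_exp_one_sub_of_Wp_le hp
    ⟨measureReal_nonneg, measureReal_le_one⟩ (by positivity) hW)

lemma expLNorm_le_of_XpNorm_le {p N : ℝ} {f : ℝ → ℝ} (hp : 1 < p) (hf : Measurable f)
    (hN : 0 < N) (h : XpNorm p f ≤ ENNReal.ofReal N) :
    expLNorm (p / (p - 1)) f ≤ ENNReal.ofReal ((exp 1 + 1) ^ (p / (p - 1))⁻¹ * N) :=
  iInf₂_le _ ⟨by positivity, lintegral_exp_rpow_sub_one_le_one hf.aemeasurable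
    (div_pos (by linarith) (by linarith)) hN fun _ ht => mu01_lt_abs_le_of_XpNorm_le hp hN h ht⟩

lemma XpNorm_rpow_le_of_lintegral_exp_le_one {α q lam : ℝ} {f : ℝ → ℝ} (hq : 1 ≤ q)
    (hγ : 1 < α * (q - 1) / q) (hf : Measurable f) (hlam : 0 < lam)
    (h : ∫⁻ x, ENNReal.ofReal (exp ((|f x| / lam) ^ α) - 1) ∂mu01 ≤ 1) :
    XpNorm q f ^ q ≤ ENNReal.ofReal (α * (q - 1) / q / (α * (q - 1) / q - 1) * lam ^ q) := by
  have hq0 : 0 < q := by linarith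
  have hα : 0 ≤ α := by
    rw [lt_div_iff₀ hq0] at hγ
    nlinarith
  rw [XpNorm_rpow hq0.ne']
  refine lintegral_Ioi_le_of_le_one_of_le_div_rpow_neg (by positivity) hγ
    (fun x => ENNReal.ofReal_le_one.2 (Wp_le_one hq ⟨measureReal_nonneg, measureReal_le_one⟩))
    fun x hx => ENNReal.ofReal_le_ofReal ?_
  have hx0 : 0 < x := (rpow_pos_of_pos hlam q).trans hx
  set t := x ^ q⁻¹
  have htx : t ^ q = x := rpow_inv_rpow hx0.le hq0.ne'
  have hlt : lam < t := (lt_rpow_inv_iff_of_pos hlam.le hx0.le hq0).2 hx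
  have hlevel : {s | x < |f s| ^ q} = {s | t < |f s|} := by
    ext s
    rw [mem_ofPred_eq, mem_ofPred_eq, ← htx]
    exact rpow_lt_rpow_iff (by positivity) (abs_nonneg _) hq0
  have hmeas := meas_lt_abs_le_of_lintegral_exp_le_one hf.aemeasurable hα hlam hlt.le h
  rw [hlevel, ← htx, ← div_rpow (by positivity) hlam.le, ← rpow_mul (by positivity)]
  refine (Wp_le_of_le_exp_one_sub hq measureReal_nonneg
    (one_le_rpow ((one_le_div hlam).2 hlt.le) hα)
    (ENNReal.toReal_le_of_le_ofReal (exp_pos _).le hmeas)).trans_eq ?_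
  rw [← rpow_mul (by positivity)]
  congr 1
  field_simp
  ring

lemma XpNorm_le_of_lintegral_exp_le_one {α q lam : ℝ} {f : ℝ → ℝ} (hq : 1 ≤ q)
    (hγ : 1 < α * (q - 1) / q) (hf : Measurable f) (hlam : 0 < lam)
    (h : ∫⁻ x, ENNReal.ofReal (exp ((|f x| / lam) ^ α) - 1) ∂mu01 ≤ 1) :
    XpNorm q f ≤ ENNReal.ofReal ((α * (q - 1) / q / (α * (q - 1) / q - 1)) ^ q⁻¹ * lam) := by
  have hq0 : 0 < q := by linarith
  have hK : 0 ≤ α * (q - 1) / q / (α * (q - 1) / q - 1) :=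
    div_nonneg (by linarith) (by linarith)
  have := ENNReal.rpow_le_rpow (XpNorm_rpow_le_of_lintegral_exp_le_one hq hγ hf hlam h)
    (inv_nonneg.2 hq0.le)
  rwa [ENNReal.rpow_rpow_inv hq0.ne', ENNReal.ofReal_rpow_of_nonneg (by positivity)
    (inv_nonneg.2 hq0.le), mul_rpow hK (by positivity), rpow_rpow_inv hlam.le hq0.ne'] at this

theorem Xp_subset_expL_subset_Xq_general (p q : ℝ) (hp : 1 < p) (hpq : p < q) :
    ∃ d D : ℝ, 0 < d ∧ 0 < D ∧
      (∀ f : ℝ → ℝ, Measurable f →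
        expLNorm (p / (p - 1)) f ≤ ENNReal.ofReal d * XpNorm p f) ∧
      (∀ f : ℝ → ℝ, Measurable f →
        XpNorm q f ≤ ENNReal.ofReal D * expLNorm (p / (p - 1)) f) := by
  set γ := p / (p - 1) * (q - 1) / q
  have hγ : 1 < γ := by
    rw [lt_div_iff₀ (by linarith), one_mul, div_mul_eq_mul_div, lt_div_iff₀ (by linarith)]
    nlinarith
  have hD : 0 < (γ / (γ - 1)) ^ q⁻¹ := rpow_pos_of_pos (div_pos (by linarith) (by linarith)) _
  refine ⟨(exp 1 + 1) ^ (p / (p - 1))⁻¹, _, by positivity, hD, fun f hf => ?_, fun f hf => ?_⟩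
  · exact le_ofReal_mul_of_forall_le_ofReal (by positivity) fun N hN h =>
      expLNorm_le_of_XpNorm_le hp hf hN h
  · have hD' : ENNReal.ofReal ((γ / (γ - 1)) ^ q⁻¹) ≠ 0 := (ENNReal.ofReal_pos.2 hD).ne'
    rw [expLNorm, ENNReal.mul_iInf_of_ne hD' ENNReal.ofReal_ne_top]
    refine le_iInf fun lam => ?_
    rw [ENNReal.mul_iInf_of_ne hD' ENNReal.ofReal_ne_top]
    refine le_iInf fun ⟨hlam, h⟩ => ?_
    rw [← ENNReal.ofReal_mul hD.le]
    exact XpNorm_le_of_lintegral_exp_le_one (by linarith) hγ hf hlam h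

/-- Claim: for `1 < p < q < 2` and `α = p/(p-1)`, one has the continuous
inclusions `X_p ⊂ Exp L^α ⊂ X_q`. -/
theorem Xp_subset_expL_subset_Xq (p q : ℝ) (hp : 1 < p) (hpq : p < q) (hq : q < 2) :
    ∃ d D : ℝ, 0 < d ∧ 0 < D ∧
      (∀ f : ℝ → ℝ, Measurable f →
        expLNorm (p / (p - 1)) f ≤ ENNReal.ofReal d * XpNorm p f) ∧
      (∀ f : ℝ → ℝ, Measurable f →
        XpNorm q f ≤ ENNReal.ofReal D * expLNorm (p / (p - 1)) f) :=
  Xp_subset_expL_subset_Xq_general p q hp hpq
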